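/- Let N ≥ 1, κ ≥ 0, let φ : SO(3)×SO(3) → [0,∞) be symmetric (φ(R,Q) = φ(Q,R)), and let (R_i, a_i)_{i=1,…,N} be a differentiable solution of the Cucker–Smale system on SO(3) on an open interval I such that for all t ∈ I and all i,k, either d(R_i(t),R_k(t)) < π or φ(R_i(t),R_k(t)) = 0. Then for all t ∈ I: d/dt Σ_{i=1}^{N} ‖a_i(t)‖² = −(κ/N) Σ_{i,k=1}^{N} φ(R_i(t),R_k(t)) ‖(1 − cos(θ_{ki}/2))(n_{ki}·a_k) n_{ki} + sin(θ_{ki}/2)(a_k × n_{ki}) + cos(θ_{ki}/2) a_k − a_i‖² ≤ 0; in particular the kinetic energy E(t) := Σ_{i=1}^{N} ‖a_i(t)‖² is non-increasing on I. -/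

import Mathlib

open Matrix Real

noncomputable section

/-- `ℝ³` with the Euclidean norm. -/
abbrev E3 := EuclideanSpace ℝ (Fin 3)

/-- Hat map: the skew-symmetric matrix associated to a vector `x ∈ ℝ³`,
with rows `(0, −x₃, x₂)`, `(x₃, 0, −x₁)`, `(−x₂, x₁, 0)`. -/
def hat (x : E3) : Matrix (Fin 3) (Fin 3) ℝ :=
  !![0, -x 2, x 1; x 2, 0, -x 0; -x 1, x 0, 0]

/-- Standard basis vectors `e_α` of `ℝ³`. -/
def e (α : Fin 3) : E3 := EuclideanSpace.single α 1

attribute [local instance] Matrix.normedAddCommGroup Matrix.normedSpace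

/-- `SO(3)`: real 3×3 matrices with `RᵀR = I` and `det R = 1`. -/
def SO3 : Set (Matrix (Fin 3) (Fin 3) ℝ) := {R | Rᵀ * R = 1 ∧ R.det = 1}

/-- Geodesic distance on SO(3): `d(R,Q) = arccos((tr(RᵀQ) − 1)/2)`. -/
def so3dist (R Q : Matrix (Fin 3) (Fin 3) ℝ) : ℝ :=
  Real.arccos (((Rᵀ * Q).trace - 1) / 2)

/-- Vee map: the inverse of the hat map on skew-symmetric matrices. -/
def vee (A : Matrix (Fin 3) (Fin 3) ℝ) : E3 := WithLp.toLp 2 ![A 2 1, A 0 2, A 1 0]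

/-- Cross product on `ℝ³`. -/
def cross3 (x y : E3) : E3 := WithLp.toLp 2 (crossProduct x y)

/-- The unit vector `n_{ki}` with `n̂_{ki} = (1/(2 sin θ_{ki}))(R_kᵀR_i − R_iᵀR_k)`
(where `θ_{ki} = d(R_i,R_k)`), set to `0` when `sin θ_{ki} = 0`. -/
def nki (Rk Ri : Matrix (Fin 3) (Fin 3) ℝ) : E3 :=
  if Real.sin (so3dist Ri Rk) = 0 then 0
  else (1 / (2 * Real.sin (so3dist Ri Rk))) • vee (Rkᵀ * Ri - Riᵀ * Rk)

/-- The Cucker–Smale interaction term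
`(1−cos(θ_{ki}/2))(n_{ki}·a_k)n_{ki} + sin(θ_{ki}/2)(a_k × n_{ki}) + cos(θ_{ki}/2)a_k − a_i`,
i.e. `P_{ki}a_k − a_i` in vector form. -/
def csForce (Ri Rk : Matrix (Fin 3) (Fin 3) ℝ) (ak ai : E3) : E3 :=
  (1 - Real.cos (so3dist Ri Rk / 2)) • ((inner ℝ (nki Rk Ri) ak : ℝ) • nki Rk Ri)
    + Real.sin (so3dist Ri Rk / 2) • cross3 ak (nki Rk Ri)
    + Real.cos (so3dist Ri Rk / 2) • ak - ai

/-- The Cucker–Smale system on SO(3) on a time set `I`: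
`Ṙ_i = R_i â_i` and
`ȧ_i = (κ/N) Σ_k φ(R_i,R_k)[(1−cos(θ_{ki}/2))(n_{ki}·a_k)n_{ki} + sin(θ_{ki}/2)(a_k×n_{ki}) + cos(θ_{ki}/2)a_k − a_i]`. -/
structure IsCSSol (N : ℕ) (κ : ℝ)
    (φ : Matrix (Fin 3) (Fin 3) ℝ → Matrix (Fin 3) (Fin 3) ℝ → ℝ) (I : Set ℝ)
    (R : Fin N → ℝ → Matrix (Fin 3) (Fin 3) ℝ) (a : Fin N → ℝ → E3) : Prop where
  memSO3 : ∀ i, ∀ t ∈ I, R i t ∈ SO3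
  hR : ∀ i, ∀ t ∈ I, HasDerivAt (R i) (R i t * hat (a i t)) t
  ha : ∀ i, ∀ t ∈ I, HasDerivAt (a i)
    ((κ / N) • ∑ k, φ (R i t) (R k t) • csForce (R i t) (R k t) (a k t) (a i t)) t

/-!
Write `θ = d(Rᵢ, R_k)`. Since `Rᵢᵀ R_k ∈ SO(3)`, the skew part of `Rᵢᵀ R_k` has norm
`2 sin θ`, so `n_{ki}` is a unit vector whenever `sin θ ≠ 0`. The interaction term is then
`P a_k − aᵢ` with `P` the rotation by `θ/2` about `n_{ki}` (Rodrigues' formula), and `P` is an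
isometry as long as `θ < π` (for `θ = 0`, `P` is the identity). For an isometry,
`2⟪aᵢ, P a_k − aᵢ⟫ = ‖a_k‖² − ‖aᵢ‖² − ‖P a_k − aᵢ‖²`; summed against the symmetric weights
`φ(Rᵢ, R_k)` the first two terms cancel, which leaves the dissipation.
-/

open Finset

lemma SO3.adjugate_eq_transpose {Q : Matrix (Fin 3) (Fin 3) ℝ} (hQ : Q ∈ SO3) :
    Q.adjugate = Qᵀ := by
  obtain ⟨horth, hdet⟩ := hQ
  calc Q.adjugate = Qᵀ * Q * Q.adjugate := by rw [horth, one_mul]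
    _ = Qᵀ := by rw [Matrix.mul_assoc, Matrix.mul_adjugate, hdet, one_smul, mul_one]

lemma SO3.transpose_mul_mem {R Q : Matrix (Fin 3) (Fin 3) ℝ} (hR : R ∈ SO3) (hQ : Q ∈ SO3) :
    Rᵀ * Q ∈ SO3 := by
  obtain ⟨hRorth, hRdet⟩ := hR
  obtain ⟨hQorth, hQdet⟩ := hQ
  refine ⟨?_, by rw [Matrix.det_mul, Matrix.det_transpose, hRdet, hQdet, mul_one]⟩
  rw [Matrix.transpose_mul, Matrix.transpose_transpose, Matrix.mul_assoc,
    ← Matrix.mul_assoc R, mul_eq_one_comm.mp hRorth, Matrix.one_mul, hQorth]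

/-- The diagonal entries of `QᵀQ = 1` and of `adj Q = Qᵀ` give the identity. -/
lemma SO3.norm_vee_transpose_sub_sq {Q : Matrix (Fin 3) (Fin 3) ℝ} (hQ : Q ∈ SO3) :
    ‖vee (Qᵀ - Q)‖ ^ 2 = 4 - (Q.trace - 1) ^ 2 := by
  have hadj := SO3.adjugate_eq_transpose hQ
  rw [Matrix.adjugate_fin_three] at hadj
  have horth := hQ.1
  have c00 := congrFun (congrFun hadj 0) 0
  have c11 := congrFun (congrFun hadj 1) 1
  have c22 := congrFun (congrFun hadj 2) 2
  have e00 := congrFun (congrFun horth 0) 0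
  have e11 := congrFun (congrFun horth 1) 1
  have e22 := congrFun (congrFun horth 2) 2
  simp [Matrix.mul_apply, Fin.sum_univ_three] at c00 c11 c22 e00 e11 e22
  simp [EuclideanSpace.real_norm_sq_eq, Fin.sum_univ_three, vee, Matrix.trace_fin_three]
  linear_combination e00 + e11 + e22 + 2 * c00 + 2 * c11 + 2 * c22

lemma norm_nki {Ri Rk : Matrix (Fin 3) (Fin 3) ℝ} (hRi : Ri ∈ SO3) (hRk : Rk ∈ SO3)
    (hsin : sin (so3dist Ri Rk) ≠ 0) : ‖nki Rk Ri‖ = 1 := by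
  have hskew : Rkᵀ * Ri - Riᵀ * Rk = (Riᵀ * Rk)ᵀ - Riᵀ * Rk := by
    rw [Matrix.transpose_mul, Matrix.transpose_transpose]
  have hvee := SO3.norm_vee_transpose_sub_sq (SO3.transpose_mul_mem hRi hRk)
  have hsin_sq : sin (so3dist Ri Rk) ^ 2 = 1 - (((Riᵀ * Rk).trace - 1) / 2) ^ 2 := by
    rw [so3dist, sin_arccos, sq_sqrt (by nlinarith [sq_nonneg ‖vee ((Riᵀ * Rk)ᵀ - Riᵀ * Rk)‖])]
  rw [← sq_eq_sq₀ (norm_nonneg _) zero_le_one, one_pow, nki, if_neg hsin, hskew, norm_smul,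
    mul_pow, hvee, Real.norm_eq_abs, sq_abs]
  field_simp
  linear_combination -4 * hsin_sq

/-- Rodrigues' formula for the rotation of `x` by the angle `α` about the axis `n`. -/
def rodrigues (α : ℝ) (n x : E3) : E3 :=
  (1 - cos α) • ((inner ℝ n x : ℝ) • n) + sin α • cross3 x n + cos α • x

lemma csForce_eq_rodrigues_sub (Ri Rk : Matrix (Fin 3) (Fin 3) ℝ) (ak ai : E3) :
    csForce Ri Rk ak ai = rodrigues (so3dist Ri Rk / 2) (nki Rk Ri) ak - ai := rfl

lemma rodrigues_zero (n x : E3) : rodrigues 0 n x = x := by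
  simp [rodrigues]

lemma norm_rodrigues (α : ℝ) {n : E3} (hn : ‖n‖ = 1) (x : E3) : ‖rodrigues α n x‖ = ‖x‖ := by
  have hn' : n 0 ^ 2 + n 1 ^ 2 + n 2 ^ 2 = 1 := by
    simpa [hn, Fin.sum_univ_three] using (EuclideanSpace.real_norm_sq_eq n).symm
  have htrig := sin_sq_add_cos_sq α
  rw [← sq_eq_sq₀ (norm_nonneg _) (norm_nonneg _)]
  simp [EuclideanSpace.real_norm_sq_eq, Fin.sum_univ_three, rodrigues, cross3, cross_apply,
    PiLp.inner_apply]
  linear_combination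
    (x 0 ^ 2 + x 1 ^ 2 + x 2 ^ 2 - (n 0 * x 0 + n 1 * x 1 + n 2 * x 2) ^ 2) * htrig
    + ((1 - cos α) ^ 2 * (n 0 * x 0 + n 1 * x 1 + n 2 * x 2) ^ 2
      + sin α ^ 2 * (x 0 ^ 2 + x 1 ^ 2 + x 2 ^ 2)) * hn'

lemma norm_rodrigues_nki {Ri Rk : Matrix (Fin 3) (Fin 3) ℝ} (hRi : Ri ∈ SO3) (hRk : Rk ∈ SO3)
    (hlt : so3dist Ri Rk < π) (x : E3) :
    ‖rodrigues (so3dist Ri Rk / 2) (nki Rk Ri) x‖ = ‖x‖ := by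
  by_cases hsin : sin (so3dist Ri Rk) = 0
  · have hnonneg : 0 ≤ so3dist Ri Rk := arccos_nonneg _
    have hzero : so3dist Ri Rk = 0 :=
      (sin_eq_zero_iff_of_lt_of_lt (by linarith [pi_pos]) hlt).mp hsin
    rw [hzero, zero_div, rodrigues_zero]
  · exact norm_rodrigues _ (norm_nki hRi hRk hsin) x

lemma two_inner_sub_eq_of_norm_eq {F : Type*} [NormedAddCommGroup F] [InnerProductSpace ℝ F]
    {x y : F} (h : ‖y‖ = ‖x‖) (z : F) :
    2 * inner ℝ z (y - z) = ‖x‖ ^ 2 - ‖z‖ ^ 2 - ‖y - z‖ ^ 2 := by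
  rw [norm_sub_sq_real, inner_sub_right, real_inner_self_eq_norm_sq, real_inner_comm, h]
  ring

lemma sum_sum_mul_sub_eq_zero {ι R : Type*} [Fintype ι] [CommRing R] {w : ι → ι → R}
    (hw : ∀ i k, w i k = w k i) (f : ι → R) :
    ∑ i, ∑ k, w i k * (f k - f i) = 0 := by
  simp only [mul_sub, sum_sub_distrib]
  rw [sum_comm, sub_eq_zero]
  simp only [hw]

lemma weighted_two_inner_csForce {Ri Rk : Matrix (Fin 3) (Fin 3) ℝ} (hRi : Ri ∈ SO3)
    (hRk : Rk ∈ SO3) {w : ℝ} (hcut : so3dist Ri Rk < π ∨ w = 0) (ak ai : E3) :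
    w * (2 * inner ℝ ai (csForce Ri Rk ak ai)) =
      w * (‖ak‖ ^ 2 - ‖ai‖ ^ 2) - w * ‖csForce Ri Rk ak ai‖ ^ 2 := by
  rcases hcut with hlt | rfl
  · rw [csForce_eq_rodrigues_sub,
      two_inner_sub_eq_of_norm_eq (norm_rodrigues_nki hRi hRk hlt ak)]
    ring
  · simp

theorem IsCSSol.hasDerivAt_energy {N : ℕ} {κ : ℝ}
    {φ : Matrix (Fin 3) (Fin 3) ℝ → Matrix (Fin 3) (Fin 3) ℝ → ℝ} {I : Set ℝ}
    {R : Fin N → ℝ → Matrix (Fin 3) (Fin 3) ℝ} {a : Fin N → ℝ → E3}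
    (hsol : IsCSSol N κ φ I R a) (hφsym : ∀ R Q, φ R Q = φ Q R) {t : ℝ} (ht : t ∈ I)
    (hcut : ∀ i k, so3dist (R i t) (R k t) < π ∨ φ (R i t) (R k t) = 0) :
    HasDerivAt (fun s => ∑ i, ‖a i s‖ ^ 2)
      (-(κ / N) * ∑ i, ∑ k, φ (R i t) (R k t) *
          ‖csForce (R i t) (R k t) (a k t) (a i t)‖ ^ 2) t := by
  refine (HasDerivAt.fun_sum fun i _ => (hsol.ha i t ht).norm_sq).congr_deriv ?_
  have hpair i k := weighted_two_inner_csForce (hsol.memSO3 i t ht) (hsol.memSO3 k t ht)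
    (hcut i k) (a k t) (a i t)
  have hcancel := sum_sum_mul_sub_eq_zero (fun i k => hφsym (R i t) (R k t))
    (fun i => ‖a i t‖ ^ 2)
  calc ∑ i, 2 * inner ℝ (a i t)
          ((κ / N) • ∑ k, φ (R i t) (R k t) • csForce (R i t) (R k t) (a k t) (a i t))
      = κ / N * ∑ i, ∑ k, φ (R i t) (R k t) *
          (2 * inner ℝ (a i t) (csForce (R i t) (R k t) (a k t) (a i t))) := by
        simp only [real_inner_smul_right, inner_sum, mul_sum]
        exact sum_congr rfl fun i _ => sum_congr rfl fun k _ => by ring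
    _ = _ := by
        simp only [hpair, sum_sub_distrib, hcancel]
        ring

theorem stmt16_general (N : ℕ) (κ : ℝ) (hκ : 0 ≤ κ)
    (φ : Matrix (Fin 3) (Fin 3) ℝ → Matrix (Fin 3) (Fin 3) ℝ → ℝ)
    (hφ0 : ∀ R Q, 0 ≤ φ R Q) (hφsym : ∀ R Q, φ R Q = φ Q R)
    (t₀ t₁ : ℝ)
    (R : Fin N → ℝ → Matrix (Fin 3) (Fin 3) ℝ) (a : Fin N → ℝ → E3)
    (hsol : IsCSSol N κ φ (Set.Ioo t₀ t₁) R a)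
    (hcut : ∀ t ∈ Set.Ioo t₀ t₁, ∀ i k,
      so3dist (R i t) (R k t) < π ∨ φ (R i t) (R k t) = 0) :
    (∀ t ∈ Set.Ioo t₀ t₁,
      HasDerivAt (fun s => ∑ i, ‖a i s‖ ^ 2)
        (-(κ / N) * ∑ i, ∑ k, φ (R i t) (R k t) *
            ‖csForce (R i t) (R k t) (a k t) (a i t)‖ ^ 2) t ∧
      -(κ / N) * ∑ i, ∑ k, φ (R i t) (R k t) *
          ‖csForce (R i t) (R k t) (a k t) (a i t)‖ ^ 2 ≤ 0) ∧
    AntitoneOn (fun t => ∑ i, ‖a i t‖ ^ 2) (Set.Ioo t₀ t₁) := by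
  have hderiv t (ht : t ∈ Set.Ioo t₀ t₁) := hsol.hasDerivAt_energy hφsym ht (hcut t ht)
  have hnonpos t : -(κ / N) * ∑ i, ∑ k, φ (R i t) (R k t) *
      ‖csForce (R i t) (R k t) (a k t) (a i t)‖ ^ 2 ≤ 0 :=
    mul_nonpos_of_nonpos_of_nonneg (neg_nonpos.mpr (by positivity))
      (sum_nonneg fun i _ => sum_nonneg fun k _ => mul_nonneg (hφ0 _ _) (sq_nonneg _))
  refine ⟨fun t ht => ⟨hderiv t ht, hnonpos t⟩, ?_⟩
  refine antitoneOn_of_hasDerivWithinAt_nonpos (convex_Ioo t₀ t₁)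
    (fun t ht => (hderiv t ht).continuousAt.continuousWithinAt) (fun t ht => ?_)
    (fun t _ => hnonpos t)
  rw [interior_Ioo] at ht ⊢
  exact (hderiv t ht).hasDerivWithinAt

/-- energy dissipation for the Cucker–Smale model on SO(3):
`d/dt Σᵢ‖aᵢ‖² = −(κ/N) Σ_{i,k} φ(Rᵢ,R_k)‖P_{ki}a_k − aᵢ‖² ≤ 0`,
and the kinetic energy is non-increasing. -/
theorem stmt16 (N : ℕ) (hN : 1 ≤ N) (κ : ℝ) (hκ : 0 ≤ κ)
    (φ : Matrix (Fin 3) (Fin 3) ℝ → Matrix (Fin 3) (Fin 3) ℝ → ℝ)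
    (hφ0 : ∀ R Q, 0 ≤ φ R Q) (hφsym : ∀ R Q, φ R Q = φ Q R)
    (t₀ t₁ : ℝ)
    (R : Fin N → ℝ → Matrix (Fin 3) (Fin 3) ℝ) (a : Fin N → ℝ → E3)
    (hsol : IsCSSol N κ φ (Set.Ioo t₀ t₁) R a)
    (hcut : ∀ t ∈ Set.Ioo t₀ t₁, ∀ i k,
      so3dist (R i t) (R k t) < π ∨ φ (R i t) (R k t) = 0) :
    (∀ t ∈ Set.Ioo t₀ t₁,
      HasDerivAt (fun s => ∑ i, ‖a i s‖ ^ 2)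
        (-(κ / N) * ∑ i, ∑ k, φ (R i t) (R k t) *
            ‖csForce (R i t) (R k t) (a k t) (a i t)‖ ^ 2) t ∧
      -(κ / N) * ∑ i, ∑ k, φ (R i t) (R k t) *
          ‖csForce (R i t) (R k t) (a k t) (a i t)‖ ^ 2 ≤ 0) ∧
    AntitoneOn (fun t => ∑ i, ‖a i t‖ ^ 2) (Set.Ioo t₀ t₁) :=
  stmt16_general N κ hκ φ hφ0 hφsym t₀ t₁ R a hsol hcut
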